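/- arXiv:2109.10018 — 2 statements merged into one kernel-verified Lean document; each statement's English description precedes it below -/
import Mathlib

section
/- Suppose X, Y ∈ MCS_χ, Γ, Δ ∈ MCS, X = Γ̄, Y = Δ̄, and {φ : ○φ ∈ Γ} ⊆ Δ. Then for every formula φ: (1) ○φ ∈ Γ iff φ ∈ Δ; (2) φ ∈ Γ iff ⊙_s φ ∈ Δ; (3) φ ∈ Γ iff ⊙_w φ ∈ Δ. -/
namespace JTO

/-- Epistemic justification terms. -/
inductive TmE (Const Var : Type) : Type
  | const : Const → TmE Const Var
  | var   : Var → TmE Const Var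
  | bang  : TmE Const Var → TmE Const Var
  | plus  : TmE Const Var → TmE Const Var → TmE Const Var
  | times : TmE Const Var → TmE Const Var → TmE Const Var

/-- Deontic (normative) justification terms. -/
inductive TmO (Const Var : Type) : Type
  | const : Const → TmO Const Var
  | var   : Var → TmO Const Var
  | ddag  : TmO Const Var → TmO Const Var
  | times : TmO Const Var → TmO Const Var → TmO Const Var

/-- Formulas of the logic JTO. -/
inductive Fm (Ag Const Var Atom : Type) : Type
  | atom  : Atom → Fm Ag Const Var Atom
  | bot   : Fm Ag Const Var Atom
  | imp   : Fm Ag Const Var Atom → Fm Ag Const Var Atom → Fm Ag Const Var Atom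
  | next  : Fm Ag Const Var Atom → Fm Ag Const Var Atom
  | wprev : Fm Ag Const Var Atom → Fm Ag Const Var Atom
  | untl  : Fm Ag Const Var Atom → Fm Ag Const Var Atom → Fm Ag Const Var Atom
  | snce  : Fm Ag Const Var Atom → Fm Ag Const Var Atom → Fm Ag Const Var Atom
  | jbox  : Ag → TmE Const Var → Fm Ag Const Var Atom → Fm Ag Const Var Atom
  | obox  : Ag → TmO Const Var → Fm Ag Const Var Atom → Fm Ag Const Var Atom

namespace Fm

variable {Ag Const Var Atom : Type}

/-- ¬φ := φ → ⊥ -/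
def neg (φ : Fm Ag Const Var Atom) : Fm Ag Const Var Atom := φ.imp bot
/-- ⊤ := ¬⊥ -/
def top : Fm Ag Const Var Atom := neg bot
/-- φ ∨ ψ := ¬φ → ψ -/
def disj (φ ψ : Fm Ag Const Var Atom) : Fm Ag Const Var Atom := (neg φ).imp ψ
/-- φ ∧ ψ := ¬(¬φ ∨ ¬ψ) -/
def conj (φ ψ : Fm Ag Const Var Atom) : Fm Ag Const Var Atom := neg (disj (neg φ) (neg ψ))
/-- φ ↔ ψ := (φ→ψ) ∧ (ψ→φ) -/
def biim (φ ψ : Fm Ag Const Var Atom) : Fm Ag Const Var Atom := conj (φ.imp ψ) (ψ.imp φ)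
/-- strong previous ⊙ₛφ := ¬⊙_w¬φ -/
def sprev (φ : Fm Ag Const Var Atom) : Fm Ag Const Var Atom := neg (wprev (neg φ))
/-- eventually ◇φ := ⊤ U φ -/
def ev (φ : Fm Ag Const Var Atom) : Fm Ag Const Var Atom := untl top φ
/-- always (henceforth) □φ := ¬◇¬φ -/
def alw (φ : Fm Ag Const Var Atom) : Fm Ag Const Var Atom := neg (ev (neg φ))
/-- once ◇⁻φ := ⊤ S φ -/
def once (φ : Fm Ag Const Var Atom) : Fm Ag Const Var Atom := snce top φ
/-- has-always-been □⁻φ := ¬◇⁻¬φ -/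
def sofar (φ : Fm Ag Const Var Atom) : Fm Ag Const Var Atom := neg (once (neg φ))
/-- ⊡φ := □⁻φ ∧ □φ -/
def boxdot (φ : Fm Ag Const Var Atom) : Fm Ag Const Var Atom := conj (sofar φ) (alw φ)
/-- weak until (unless) φ W ψ := (φ U ψ) ∨ □φ -/
def wuntl (φ ψ : Fm Ag Const Var Atom) : Fm Ag Const Var Atom := disj (untl φ ψ) (alw φ)
/-- permission P[s]ᵢφ := ¬O[s]ᵢ¬φ -/
def pbox (i : Ag) (t : TmO Const Var) (φ : Fm Ag Const Var Atom) : Fm Ag Const Var Atom :=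
  neg (obox i t (neg φ))
/-- time = m, i.e. ⊙ₛ^m ⊙_w ⊥ -/
def timeEq : ℕ → Fm Ag Const Var Atom
  | 0 => wprev bot
  | m + 1 => sprev (timeEq m)
/-- true_m(φ) := ⊡(time=m → φ) -/
def trueAt (m : ℕ) (φ : Fm Ag Const Var Atom) : Fm Ag Const Var Atom :=
  boxdot ((timeEq m).imp φ)

/-- Subformulas. -/
def subf : Fm Ag Const Var Atom → Set (Fm Ag Const Var Atom)
  | atom p => {atom p}
  | bot => {bot}
  | imp φ ψ => insert (imp φ ψ) (subf φ ∪ subf ψ)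
  | next φ => insert (next φ) (subf φ)
  | wprev φ => insert (wprev φ) (subf φ)
  | untl φ ψ => insert (untl φ ψ) (subf φ ∪ subf ψ)
  | snce φ ψ => insert (snce φ ψ) (subf φ ∪ subf ψ)
  | jbox i t φ => insert (jbox i t φ) (subf φ)
  | obox i t φ => insert (obox i t φ) (subf φ)

/-- Subf⁺(χ) := A_χ ∪ {¬ψ : ψ ∈ A_χ}, with A_χ = Subf(χ) ∪ Subf(⊤ S ⊙_w⊥). -/
def subfPlus (χ : Fm Ag Const Var Atom) : Set (Fm Ag Const Var Atom) :=
  (subf χ ∪ subf (snce top (wprev bot))) ∪ neg '' (subf χ ∪ subf (snce top (wprev bot)))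

end Fm

variable {Ag Const Var Atom : Type}

/-- Propositional tautologies in the language of JTO. -/
def Taut (φ : Fm Ag Const Var Atom) : Prop :=
  ∀ v : Fm Ag Const Var Atom → Bool,
    v Fm.bot = false → (∀ a b, v (a.imp b) = (!(v a) || v b)) → v φ = true

/-- The axioms of JTO. -/
inductive IsAxiom : Fm Ag Const Var Atom → Prop
  | taut {φ : Fm Ag Const Var Atom} : Taut φ → IsAxiom φ
  | nextK (φ ψ : Fm Ag Const Var Atom) :
      IsAxiom ((Fm.next (φ.imp ψ)).imp ((Fm.next φ).imp (Fm.next ψ)))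
  | alwK (φ ψ : Fm Ag Const Var Atom) :
      IsAxiom ((Fm.alw (φ.imp ψ)).imp ((Fm.alw φ).imp (Fm.alw ψ)))
  | fn (φ : Fm Ag Const Var Atom) :
      IsAxiom (Fm.biim (Fm.next (Fm.neg φ)) (Fm.neg (Fm.next φ)))
  | ind (φ : Fm Ag Const Var Atom) :
      IsAxiom ((Fm.alw (φ.imp (Fm.next φ))).imp (φ.imp (Fm.alw φ)))
  | untl1 (φ ψ : Fm Ag Const Var Atom) :
      IsAxiom ((Fm.untl φ ψ).imp (Fm.ev ψ))
  | untl2 (φ ψ : Fm Ag Const Var Atom) :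
      IsAxiom (Fm.biim (Fm.untl φ ψ) (Fm.disj ψ (Fm.conj φ (Fm.next (Fm.untl φ ψ)))))
  | sofarK (φ ψ : Fm Ag Const Var Atom) :
      IsAxiom ((Fm.sofar (φ.imp ψ)).imp ((Fm.sofar φ).imp (Fm.sofar ψ)))
  | wprevK (φ ψ : Fm Ag Const Var Atom) :
      IsAxiom ((Fm.wprev (φ.imp ψ)).imp ((Fm.wprev φ).imp (Fm.wprev ψ)))
  | sw (φ : Fm Ag Const Var Atom) : IsAxiom ((Fm.sprev φ).imp (Fm.wprev φ))
  | initial : IsAxiom (Fm.once (Fm.wprev (Fm.bot : Fm Ag Const Var Atom)))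
  | sofarInd (φ : Fm Ag Const Var Atom) :
      IsAxiom ((Fm.sofar (φ.imp (Fm.wprev φ))).imp (φ.imp (Fm.sofar φ)))
  | snce1 (φ ψ : Fm Ag Const Var Atom) : IsAxiom ((Fm.snce φ ψ).imp (Fm.once ψ))
  | snce2 (φ ψ : Fm Ag Const Var Atom) :
      IsAxiom (Fm.biim (Fm.snce φ ψ) (Fm.disj ψ (Fm.conj φ (Fm.sprev (Fm.snce φ ψ)))))
  | fp (φ : Fm Ag Const Var Atom) : IsAxiom (φ.imp (Fm.next (Fm.sprev φ)))
  | pf (φ : Fm Ag Const Var Atom) : IsAxiom (φ.imp (Fm.wprev (Fm.next φ)))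
  | app (i : Ag) (t s : TmE Const Var) (φ ψ : Fm Ag Const Var Atom) :
      IsAxiom ((Fm.jbox i t (φ.imp ψ)).imp ((Fm.jbox i s φ).imp (Fm.jbox i (TmE.times t s) ψ)))
  | sum1 (i : Ag) (t s : TmE Const Var) (φ : Fm Ag Const Var Atom) :
      IsAxiom ((Fm.jbox i t φ).imp (Fm.jbox i (TmE.plus t s) φ))
  | sum2 (i : Ag) (t s : TmE Const Var) (φ : Fm Ag Const Var Atom) :
      IsAxiom ((Fm.jbox i s φ).imp (Fm.jbox i (TmE.plus t s) φ))
  | fact (i : Ag) (t : TmE Const Var) (φ : Fm Ag Const Var Atom) :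
      IsAxiom ((Fm.jbox i t φ).imp φ)
  | pos (i : Ag) (t : TmE Const Var) (φ : Fm Ag Const Var Atom) :
      IsAxiom ((Fm.jbox i t φ).imp (Fm.jbox i (TmE.bang t) (Fm.jbox i t φ)))
  | appO (i : Ag) (t s : TmO Const Var) (φ ψ : Fm Ag Const Var Atom) :
      IsAxiom ((Fm.obox i t (φ.imp ψ)).imp ((Fm.obox i s φ).imp (Fm.obox i (TmO.times t s) ψ)))
  | noc (i : Ag) (t : TmO Const Var) (φ : Fm Ag Const Var Atom) :
      IsAxiom ((Fm.obox i t φ).imp (Fm.pbox i t φ))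
  | ofact (i : Ag) (t : TmO Const Var) (φ : Fm Ag Const Var Atom) :
      IsAxiom (Fm.obox i (TmO.ddag t) ((Fm.obox i t φ).imp φ))

/-- Formulas of the shape [c_{j_n}]_{i_n} … [c_{j_1}]_{i_1} φ with φ an axiom instance, n ≥ 1. -/
inductive EIter : Fm Ag Const Var Atom → Prop
  | base {i : Ag} {c : Const} {φ : Fm Ag Const Var Atom} :
      IsAxiom φ → EIter (Fm.jbox i (TmE.const c) φ)
  | step {i : Ag} {c : Const} {φ : Fm Ag Const Var Atom} :
      EIter φ → EIter (Fm.jbox i (TmE.const c) φ)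

/-- Formulas of the shape O[c_{j_n}]_{i_n} … O[c_{j_1}]_{i_1} φ with φ an axiom instance, n ≥ 1. -/
inductive OIter : Fm Ag Const Var Atom → Prop
  | base {i : Ag} {c : Const} {φ : Fm Ag Const Var Atom} :
      IsAxiom φ → OIter (Fm.obox i (TmO.const c) φ)
  | step {i : Ag} {c : Const} {φ : Fm Ag Const Var Atom} :
      OIter φ → OIter (Fm.obox i (TmO.const c) φ)

/-- A constant specification: a downward closed set of iterated constant-justification
assertions of axiom instances. -/
structure ConstSpec (Ag Const Var Atom : Type) where
  set : Set (Fm Ag Const Var Atom)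
  shape : ∀ φ ∈ set, EIter φ ∨ OIter φ
  dcE : ∀ (i : Ag) (c : Const) (φ : Fm Ag Const Var Atom),
    Fm.jbox i (TmE.const c) φ ∈ set → EIter φ → φ ∈ set
  dcO : ∀ (i : Ag) (c : Const) (φ : Fm Ag Const Var Atom),
    Fm.obox i (TmO.const c) φ ∈ set → OIter φ → φ ∈ set

/-- CS^E : the epistemic part of a constant specification. -/
def ConstSpec.csE (CS : ConstSpec Ag Const Var Atom) : Set (Fm Ag Const Var Atom) :=
  {φ ∈ CS.set | EIter φ}

/-- CS^O : the deontic part of a constant specification. -/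
def ConstSpec.csO (CS : ConstSpec Ag Const Var Atom) : Set (Fm Ag Const Var Atom) :=
  {φ ∈ CS.set | OIter φ}

/-- Derivability in the Hilbert system JTO_CS. -/
inductive Deriv (CS : ConstSpec Ag Const Var Atom) : Fm Ag Const Var Atom → Prop
  | ax {φ : Fm Ag Const Var Atom} : IsAxiom φ → Deriv CS φ
  | mp {φ ψ : Fm Ag Const Var Atom} : Deriv CS (φ.imp ψ) → Deriv CS φ → Deriv CS ψ
  | necNext {φ : Fm Ag Const Var Atom} : Deriv CS φ → Deriv CS (Fm.next φ)
  | necWPrev {φ : Fm Ag Const Var Atom} : Deriv CS φ → Deriv CS (Fm.wprev φ)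
  | necAlw {φ : Fm Ag Const Var Atom} : Deriv CS φ → Deriv CS (Fm.alw φ)
  | necSofar {φ : Fm Ag Const Var Atom} : Deriv CS φ → Deriv CS (Fm.sofar φ)
  | csax {φ : Fm Ag Const Var Atom} : φ ∈ CS.set → Deriv CS φ

/-- Conjunction of a list of formulas. -/
def conjList : List (Fm Ag Const Var Atom) → Fm Ag Const Var Atom
  | [] => Fm.top
  | φ :: l => Fm.conj φ (conjList l)

/-- T ⊢_CS φ iff ⊢_CS (ψ₁ ∧ … ∧ ψ_n) → φ for some ψ₁, …, ψ_n ∈ T. -/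
def DerivFrom (CS : ConstSpec Ag Const Var Atom) (T : Set (Fm Ag Const Var Atom))
    (φ : Fm Ag Const Var Atom) : Prop :=
  ∃ L : List (Fm Ag Const Var Atom), (∀ ψ ∈ L, ψ ∈ T) ∧ Deriv CS ((conjList L).imp φ)

/-- A set of formulas is consistent if it does not derive ⊥. -/
def Consistent (CS : ConstSpec Ag Const Var Atom) (T : Set (Fm Ag Const Var Atom)) : Prop :=
  ¬ DerivFrom CS T Fm.bot

end JTO
namespace JTO

variable {Ag Const Var Atom : Type}

/-- The data of an F-interpreted system (Fitting-style), without conditions. -/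
structure FQuasi (Ag Const Var Atom S : Type) where
  R : Set (ℕ → S)
  K : Ag → S → S → Prop
  KO : Ag → S → S → Prop
  E : Ag → S → TmE Const Var → Set (Fm Ag Const Var Atom)
  EO : Ag → S → TmO Const Var → Set (Fm Ag Const Var Atom)
  val : S → Set Atom

/-- Truth at a point (r, n) of an F-interpreted system. -/
def FQuasi.Sat {S : Type} (I : FQuasi Ag Const Var Atom S) :
    Fm Ag Const Var Atom → (ℕ → S) → ℕ → Prop
  | .atom p, r, n => p ∈ I.val (r n)
  | .bot, _, _ => False
  | .imp φ ψ, r, n => I.Sat φ r n → I.Sat ψ r n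
  | .next φ, r, n => I.Sat φ r (n + 1)
  | .wprev φ, r, n => n = 0 ∨ I.Sat φ r (n - 1)
  | .untl φ ψ, r, n => ∃ m, n ≤ m ∧ I.Sat ψ r m ∧ ∀ k, n ≤ k → k < m → I.Sat φ r k
  | .snce φ ψ, r, n => ∃ m, m ≤ n ∧ I.Sat ψ r m ∧ ∀ k, m < k → k ≤ n → I.Sat φ r k
  | .jbox i t φ, r, n =>
      φ ∈ I.E i (r n) t ∧ ∀ r' ∈ I.R, ∀ n' : ℕ, I.K i (r n) (r' n') → I.Sat φ r' n'
  | .obox i t φ, r, n =>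
      φ ∈ I.EO i (r n) t ∧ ∀ r' ∈ I.R, ∀ n' : ℕ, I.KO i (r n) (r' n') → I.Sat φ r' n'

/-- An F-interpreted system for JTO_CS. -/
structure FIS (Ag Const Var Atom S : Type) (CS : ConstSpec Ag Const Var Atom)
    extends FQuasi Ag Const Var Atom S where
  Sne : Nonempty S
  Rne : R.Nonempty
  Krefl : ∀ (i : Ag) (w : S), K i w w
  Ktrans : ∀ (i : Ag) (u v w : S), K i u v → K i v w → K i u w
  KOshift : ∀ (i : Ag) (w v : S), KO i w v → KO i v v
  Emono : ∀ (i : Ag) (v w : S) (t : TmE Const Var), K i v w → E i v t ⊆ E i w t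
  Ecs : ∀ (i : Ag) (w : S) (t : TmE Const Var) (φ : Fm Ag Const Var Atom),
    Fm.jbox i t φ ∈ CS.csE → φ ∈ E i w t
  Eapp : ∀ (i : Ag) (w : S) (t s : TmE Const Var) (φ ψ : Fm Ag Const Var Atom),
    φ.imp ψ ∈ E i w t → φ ∈ E i w s → ψ ∈ E i w (TmE.times t s)
  Epos : ∀ (i : Ag) (w : S) (t : TmE Const Var) (φ : Fm Ag Const Var Atom),
    φ ∈ E i w t → Fm.jbox i t φ ∈ E i w (TmE.bang t)
  EOcs : ∀ (i : Ag) (w : S) (t : TmO Const Var) (φ : Fm Ag Const Var Atom),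
    Fm.obox i t φ ∈ CS.csO → φ ∈ EO i w t
  EOapp : ∀ (i : Ag) (w : S) (t s : TmO Const Var) (φ ψ : Fm Ag Const Var Atom),
    φ.imp ψ ∈ EO i w t → φ ∈ EO i w s → ψ ∈ EO i w (TmO.times t s)
  EOcons : ∀ (i : Ag) (w : S) (t : TmO Const Var) (φ : Fm Ag Const Var Atom),
    φ ∈ EO i w t → Fm.neg φ ∉ EO i w t
  EOfact : ∀ (i : Ag) (w : S) (t : TmO Const Var) (φ : Fm Ag Const Var Atom),
    (Fm.obox i t φ).imp φ ∈ EO i w (TmO.ddag t)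

/-- Truth at a point of an F-interpreted system. -/
abbrev FIS.Sat {S : Type} {CS : ConstSpec Ag Const Var Atom}
    (I : FIS Ag Const Var Atom S CS) :
    Fm Ag Const Var Atom → (ℕ → S) → ℕ → Prop :=
  I.toFQuasi.Sat

/-- I ⊨ φ : truth at every point of the system. -/
def FIS.Valid {S : Type} {CS : ConstSpec Ag Const Var Atom}
    (I : FIS Ag Const Var Atom S CS) (φ : Fm Ag Const Var Atom) : Prop :=
  ∀ r ∈ I.R, ∀ n : ℕ, I.Sat φ r n

/-- ⊨_CS φ : validity in all F-interpreted systems for JTO_CS. -/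
def FValid (CS : ConstSpec Ag Const Var Atom) (φ : Fm Ag Const Var Atom) : Prop :=
  ∀ (S : Type) (I : FIS Ag Const Var Atom S CS), I.Valid φ

/-- T ⊨_CS φ : the local consequence relation over F-interpreted systems. -/
def FConseq (CS : ConstSpec Ag Const Var Atom) (T : Set (Fm Ag Const Var Atom))
    (φ : Fm Ag Const Var Atom) : Prop :=
  ∀ (S : Type) (I : FIS Ag Const Var Atom S CS), ∀ r ∈ I.R, ∀ n : ℕ,
    (∀ ψ ∈ T, I.Sat ψ r n) → I.Sat φ r n

/-- Maximal consistent sets of formulas. -/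
def MCS (CS : ConstSpec Ag Const Var Atom) : Set (Set (Fm Ag Const Var Atom)) :=
  {Γ | Consistent CS Γ ∧ ∀ Δ, Γ ⊂ Δ → ¬ Consistent CS Δ}

/-- χ-maximal consistent subsets of Subf⁺(χ). -/
def MCSx (CS : ConstSpec Ag Const Var Atom) (χ : Fm Ag Const Var Atom) :
    Set (Set (Fm Ag Const Var Atom)) :=
  {X | X ⊆ Fm.subfPlus χ ∧ Consistent CS X ∧
    ∀ Y, Y ⊆ Fm.subfPlus χ → X ⊂ Y → ¬ Consistent CS Y}

/-- The relation R_○ on MCS_χ (given by witnessing maximal consistent sets). -/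
def Rnext (CS : ConstSpec Ag Const Var Atom) (χ : Fm Ag Const Var Atom)
    (X Y : Set (Fm Ag Const Var Atom)) : Prop :=
  ∃ Γ ∈ MCS CS, ∃ Δ ∈ MCS CS, X = Γ ∩ Fm.subfPlus χ ∧ Y = Δ ∩ Fm.subfPlus χ ∧
    {φ | Fm.next φ ∈ Γ} ⊆ Δ

/-- Acceptable sequences of elements of MCS_χ. -/
def Acceptable (CS : ConstSpec Ag Const Var Atom) (χ : Fm Ag Const Var Atom)
    (X : ℕ → Set (Fm Ag Const Var Atom)) : Prop :=
  (∀ n, X n ∈ MCSx CS χ) ∧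
  (∀ n, Rnext CS χ (X n) (X (n + 1))) ∧
  (∀ n (φ ψ : Fm Ag Const Var Atom), Fm.untl φ ψ ∈ X n →
    ∃ m, n ≤ m ∧ ψ ∈ X m ∧ ∀ k, n ≤ k → k < m → φ ∈ X k) ∧
  Fm.wprev Fm.bot ∈ X 0

/-- The canonical epistemic accessibility relation. -/
def canK (CS : ConstSpec Ag Const Var Atom) (χ : Fm Ag Const Var Atom) (i : Ag)
    (X Y : Set (Fm Ag Const Var Atom)) : Prop :=
  ∀ Δ ∈ MCS CS, Y = Δ ∩ Fm.subfPlus χ →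
    ∃ Γ ∈ MCS CS, X = Γ ∩ Fm.subfPlus χ ∧
      {φ | ∃ t : TmE Const Var, Fm.jbox i t φ ∈ Γ} ⊆ Δ

/-- The canonical evidence function. -/
def canE (CS : ConstSpec Ag Const Var Atom) (χ : Fm Ag Const Var Atom) (i : Ag)
    (X : Set (Fm Ag Const Var Atom)) (t : TmE Const Var) : Set (Fm Ag Const Var Atom) :=
  {φ | ∀ Γ ∈ MCS CS, X = Γ ∩ Fm.subfPlus χ → Fm.jbox i t φ ∈ Γ}

/-- The canonical deontic accessibility relation. -/
def canKO (CS : ConstSpec Ag Const Var Atom) (χ : Fm Ag Const Var Atom) (i : Ag)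
    (X Y : Set (Fm Ag Const Var Atom)) : Prop :=
  ∃ Γ ∈ MCS CS, ∃ Δ ∈ MCS CS, X = Γ ∩ Fm.subfPlus χ ∧ Y = Δ ∩ Fm.subfPlus χ ∧
    {φ | ∃ t : TmO Const Var, Fm.obox i t φ ∈ Γ} ⊆ Δ

/-- The canonical normative evidence function. -/
def canEO (CS : ConstSpec Ag Const Var Atom) (χ : Fm Ag Const Var Atom) (i : Ag)
    (X : Set (Fm Ag Const Var Atom)) (t : TmO Const Var) : Set (Fm Ag Const Var Atom) :=
  {φ | ∀ Γ ∈ MCS CS, X = Γ ∩ Fm.subfPlus χ → Fm.obox i t φ ∈ Γ}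

/-- The χ-canonical F-interpreted system (as structured data). -/
def canFQuasi (CS : ConstSpec Ag Const Var Atom) (χ : Fm Ag Const Var Atom) :
    FQuasi Ag Const Var Atom ↥(MCSx CS χ) where
  R := {r | Acceptable CS χ (fun n => ((r n : Set (Fm Ag Const Var Atom))))}
  K := fun i X Y => canK CS χ i X.1 Y.1
  KO := fun i X Y => canKO CS χ i X.1 Y.1
  E := fun i X t => canE CS χ i X.1 t
  EO := fun i X t => canEO CS χ i X.1 t
  val := fun X => {p | Fm.atom p ∈ X.1}

end JTO
namespace JTO

variable {Ag Const Var Atom : Type}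

/-- The data of a quasi-interpreted-neighborhood system. -/
structure NQuasi (Ag Const Var Atom S : Type) where
  R : Set (ℕ → S)
  N : Ag → S → TmE Const Var → Set (Set S)
  NO : Ag → S → TmO Const Var → Set (Set S)
  val : S → Set Atom
  valF : S → Set (Fm Ag Const Var Atom)

/-- The image Im(R) of the system of runs. -/
def NQuasi.Im {S : Type} (I : NQuasi Ag Const Var Atom S) : Set S :=
  {w | ∃ r ∈ I.R, ∃ n : ℕ, r n = w}

/-- Truth at a point (r, n) of a quasi-interpreted-neighborhood system. -/
def NQuasi.SatP {S : Type} (I : NQuasi Ag Const Var Atom S) :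
    Fm Ag Const Var Atom → (ℕ → S) → ℕ → Prop
  | .atom p, r, n => p ∈ I.val (r n)
  | .bot, _, _ => False
  | .imp φ ψ, r, n => I.SatP φ r n → I.SatP ψ r n
  | .next φ, r, n => I.SatP φ r (n + 1)
  | .wprev φ, r, n => n = 0 ∨ I.SatP φ r (n - 1)
  | .untl φ ψ, r, n => ∃ m, n ≤ m ∧ I.SatP ψ r m ∧ ∀ k, n ≤ k → k < m → I.SatP φ r k
  | .snce φ ψ, r, n => ∃ m, m ≤ n ∧ I.SatP ψ r m ∧ ∀ k, m < k → k ≤ n → I.SatP φ r k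
  | .jbox i t φ, r, n =>
      {w | (∃ r' ∈ I.R, ∃ n' : ℕ, r' n' = w ∧ I.SatP φ r' n') ∨
            (w ∉ I.Im ∧ φ ∈ I.valF w)} ∈ I.N i (r n) t
  | .obox i t φ, r, n =>
      {w | (∃ r' ∈ I.R, ∃ n' : ℕ, r' n' = w ∧ I.SatP φ r' n') ∨
            (w ∉ I.Im ∧ φ ∈ I.valF w)} ∈ I.NO i (r n) t

/-- Truth at a state of a quasi-interpreted-neighborhood system. -/
def NQuasi.SatS {S : Type} (I : NQuasi Ag Const Var Atom S)
    (φ : Fm Ag Const Var Atom) (w : S) : Prop :=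
  (∃ r ∈ I.R, ∃ n : ℕ, r n = w ∧ I.SatP φ r n) ∨ (w ∉ I.Im ∧ φ ∈ I.valF w)

/-- The truth set ⟦φ⟧ of a formula. -/
def NQuasi.tset {S : Type} (I : NQuasi Ag Const Var Atom S)
    (φ : Fm Ag Const Var Atom) : Set S :=
  {w | I.SatS φ w}

/-- An interpreted-neighborhood system for JTO_CS. -/
structure NIS (Ag Const Var Atom S : Type) (CS : ConstSpec Ag Const Var Atom)
    extends NQuasi Ag Const Var Atom S where
  Sne : Nonempty S
  Rne : R.Nonempty
  Ncs : ∀ (i : Ag) (t : TmE Const Var) (φ : Fm Ag Const Var Atom),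
    Fm.jbox i t φ ∈ CS.csE → ∀ w ∈ toNQuasi.Im, toNQuasi.tset φ ∈ N i w t
  Napp : ∀ (i : Ag), ∀ w ∈ toNQuasi.Im, ∀ (t s : TmE Const Var) (φ ψ : Fm Ag Const Var Atom),
    toNQuasi.tset (φ.imp ψ) ∈ N i w t → toNQuasi.tset φ ∈ N i w s →
      toNQuasi.tset ψ ∈ N i w (TmE.times t s)
  Nsum : ∀ (i : Ag), ∀ w ∈ toNQuasi.Im, ∀ (t s : TmE Const Var) (φ : Fm Ag Const Var Atom),
    toNQuasi.tset φ ∈ N i w s →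
      toNQuasi.tset φ ∈ N i w (TmE.plus t s) ∧ toNQuasi.tset φ ∈ N i w (TmE.plus s t)
  Nrefl : ∀ (i : Ag), ∀ w ∈ toNQuasi.Im, ∀ (t : TmE Const Var) (φ : Fm Ag Const Var Atom),
    toNQuasi.tset φ ∈ N i w t → w ∈ toNQuasi.tset φ
  Npos : ∀ (i : Ag), ∀ w ∈ toNQuasi.Im, ∀ (t : TmE Const Var) (φ : Fm Ag Const Var Atom),
    toNQuasi.tset φ ∈ N i w t → toNQuasi.tset (Fm.jbox i t φ) ∈ N i w (TmE.bang t)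
  NOcs : ∀ (i : Ag) (t : TmO Const Var) (φ : Fm Ag Const Var Atom),
    Fm.obox i t φ ∈ CS.csO → ∀ w ∈ toNQuasi.Im, toNQuasi.tset φ ∈ NO i w t
  NOapp : ∀ (i : Ag), ∀ w ∈ toNQuasi.Im, ∀ (t s : TmO Const Var) (φ ψ : Fm Ag Const Var Atom),
    toNQuasi.tset (φ.imp ψ) ∈ NO i w t → toNQuasi.tset φ ∈ NO i w s →
      toNQuasi.tset ψ ∈ NO i w (TmO.times t s)
  NOnoc : ∀ (i : Ag), ∀ w ∈ toNQuasi.Im, ∀ (t : TmO Const Var) (φ : Fm Ag Const Var Atom),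
    toNQuasi.tset φ ∈ NO i w t → toNQuasi.tset (Fm.neg φ) ∉ NO i w t
  NOfact : ∀ (i : Ag), ∀ w ∈ toNQuasi.Im, ∀ (t : TmO Const Var) (φ : Fm Ag Const Var Atom),
    toNQuasi.tset ((Fm.obox i t φ).imp φ) ∈ NO i w (TmO.ddag t)

/-- Truth at a point of an interpreted-neighborhood system. -/
abbrev NIS.SatP {S : Type} {CS : ConstSpec Ag Const Var Atom}
    (I : NIS Ag Const Var Atom S CS) :
    Fm Ag Const Var Atom → (ℕ → S) → ℕ → Prop :=
  I.toNQuasi.SatP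

/-- I ⊨ φ for an interpreted-neighborhood system. -/
def NIS.Valid {S : Type} {CS : ConstSpec Ag Const Var Atom}
    (I : NIS Ag Const Var Atom S CS) (φ : Fm Ag Const Var Atom) : Prop :=
  ∀ r ∈ I.R, ∀ n : ℕ, I.SatP φ r n

/-- ⊨^N_CS φ : validity in all interpreted-neighborhood systems for JTO_CS. -/
def NValid (CS : ConstSpec Ag Const Var Atom) (φ : Fm Ag Const Var Atom) : Prop :=
  ∀ (S : Type) (I : NIS Ag Const Var Atom S CS), I.Valid φ

/-- T ⊨^N_CS φ : local consequence over interpreted-neighborhood systems. -/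
def NConseq (CS : ConstSpec Ag Const Var Atom) (T : Set (Fm Ag Const Var Atom))
    (φ : Fm Ag Const Var Atom) : Prop :=
  ∀ (S : Type) (I : NIS Ag Const Var Atom S CS), ∀ r ∈ I.R, ∀ n : ℕ,
    (∀ ψ ∈ T, I.SatP ψ r n) → I.SatP φ r n

end JTO

namespace JTO

section Aux

variable {Ag Const Var Atom : Type} {CS : ConstSpec Ag Const Var Atom}

lemma deriv_taut {φ : Fm Ag Const Var Atom} (h : Taut φ) : Deriv CS φ :=
  Deriv.ax (IsAxiom.taut h)

lemma eval_neg (v : Fm Ag Const Var Atom → Bool) (hb : v Fm.bot = false)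
    (hi : ∀ a b, v (a.imp b) = (!(v a) || v b)) :
    ∀ a, v (Fm.neg a) = !(v a) := by
  intro a; simp [Fm.neg, hi, hb]

lemma eval_top (v : Fm Ag Const Var Atom → Bool) (hb : v Fm.bot = false)
    (hi : ∀ a b, v (a.imp b) = (!(v a) || v b)) :
    v Fm.top = true := by
  simp [Fm.top, eval_neg v hb hi, hb]

lemma eval_conj (v : Fm Ag Const Var Atom → Bool) (hb : v Fm.bot = false)
    (hi : ∀ a b, v (a.imp b) = (!(v a) || v b)) :
    ∀ a b, v (Fm.conj a b) = (v a && v b) := by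
  intro a b
  cases ha : v a <;> cases hbb : v b <;>
    simp [Fm.conj, Fm.disj, eval_neg v hb hi, hi, ha, hbb]

lemma eval_conjList (v : Fm Ag Const Var Atom → Bool) (hb : v Fm.bot = false)
    (hi : ∀ a b, v (a.imp b) = (!(v a) || v b)) :
    ∀ L : List (Fm Ag Const Var Atom), v (conjList L) = L.all (fun ψ => v ψ) := by
  intro L
  induction L with
  | nil => simp [conjList, eval_top v hb hi]
  | cons φ l ih => simp [conjList, eval_conj v hb hi, ih]

lemma deriv_conjList_imp {L : List (Fm Ag Const Var Atom)} {φ : Fm Ag Const Var Atom}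
    (h : ∀ v : Fm Ag Const Var Atom → Bool, v Fm.bot = false →
      (∀ a b, v (a.imp b) = (!(v a) || v b)) →
      (∀ ψ ∈ L, v ψ = true) → v φ = true) :
    Deriv CS ((conjList L).imp φ) := by
  apply deriv_taut
  intro v hb hi
  rw [hi, eval_conjList v hb hi]
  cases hall : L.all (fun ψ => v ψ) with
  | false => simp
  | true =>
      have : ∀ ψ ∈ L, v ψ = true := by
        rw [List.all_eq_true] at hall; exact fun ψ hψ => hall ψ hψ
      simp [h v hb hi this]

lemma derivFrom_of_deriv {T : Set (Fm Ag Const Var Atom)} {φ : Fm Ag Const Var Atom}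
    (d : Deriv CS φ) : DerivFrom CS T φ := by
  refine ⟨[], by simp, ?_⟩
  have tk : Taut (φ.imp ((conjList ([] : List (Fm Ag Const Var Atom))).imp φ)) := by
    intro v hb hi
    cases hφ : v φ <;> simp [hi, hφ]
  exact Deriv.mp (deriv_taut tk) d

lemma derivFrom_mem {T : Set (Fm Ag Const Var Atom)} {φ : Fm Ag Const Var Atom}
    (hφ : φ ∈ T) : DerivFrom CS T φ := by
  refine ⟨[φ], by simpa using hφ, ?_⟩
  exact deriv_conjList_imp (fun v hb hi hall => hall φ (by simp))

lemma derivFrom_mp {T : Set (Fm Ag Const Var Atom)} {φ ψ : Fm Ag Const Var Atom}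
    (h1 : DerivFrom CS T (φ.imp ψ)) (h2 : DerivFrom CS T φ) : DerivFrom CS T ψ := by
  obtain ⟨L1, hL1, d1⟩ := h1
  obtain ⟨L2, hL2, d2⟩ := h2
  refine ⟨L1 ++ L2, ?_, ?_⟩
  · intro χ hχ
    rcases List.mem_append.1 hχ with hc | hc
    · exact hL1 χ hc
    · exact hL2 χ hc
  · have c1 : Deriv CS ((conjList (L1 ++ L2)).imp (conjList L1)) :=
      deriv_conjList_imp (fun v hb hi hall => by
        rw [eval_conjList v hb hi, List.all_eq_true]
        exact fun ψ hψ => hall ψ (List.mem_append.2 (Or.inl hψ)))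
    have c2 : Deriv CS ((conjList (L1 ++ L2)).imp (conjList L2)) :=
      deriv_conjList_imp (fun v hb hi hall => by
        rw [eval_conjList v hb hi, List.all_eq_true]
        exact fun ψ hψ => hall ψ (List.mem_append.2 (Or.inr hψ)))
    set A := conjList (L1 ++ L2)
    set B := conjList L1
    set C := conjList L2
    have tchain : Taut ((A.imp B).imp ((B.imp (φ.imp ψ)).imp
        ((A.imp C).imp ((C.imp φ).imp (A.imp ψ))))) := by
      intro v hb hi
      cases hA : v A <;> cases hB : v B <;> cases hC : v C <;>
        cases hφ : v φ <;> cases hψ : v ψ <;> simp [hi, hA, hB, hC, hφ, hψ]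
    exact ((((deriv_taut tchain).mp c1).mp d1).mp c2).mp d2

lemma deduction_aux {T : Set (Fm Ag Const Var Atom)} {φ : Fm Ag Const Var Atom} :
    ∀ (L : List (Fm Ag Const Var Atom)) (ψ : Fm Ag Const Var Atom),
      (∀ χ ∈ L, χ = φ ∨ χ ∈ T) → Deriv CS ((conjList L).imp ψ) →
      DerivFrom CS T (φ.imp ψ) := by
  intro L
  induction L with
  | nil =>
      intro ψ _ hd
      have dtop : Deriv CS (conjList ([] : List (Fm Ag Const Var Atom))) :=
        deriv_taut (by intro v hb hi; simp [conjList, eval_top v hb hi])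
      have dψ : Deriv CS ψ := hd.mp dtop
      have tk : Taut (ψ.imp (φ.imp ψ)) := by
        intro v hb hi; cases hψ : v ψ <;> cases hφ : v φ <;> simp [hi, hψ, hφ]
      exact derivFrom_of_deriv ((deriv_taut tk).mp dψ)
  | cons χ l ih =>
      intro ψ hmem hd
      have texp : Taut (((Fm.conj χ (conjList l)).imp ψ).imp ((conjList l).imp (χ.imp ψ))) := by
        intro v hb hi
        cases hχ : v χ <;> cases hl : v (conjList l) <;> cases hψ : v ψ <;>
          simp [hi, eval_conj v hb hi, hχ, hl, hψ]
      have hd' : Deriv CS ((conjList l).imp (χ.imp ψ)) := (deriv_taut texp).mp hd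
      have hmem' : ∀ χ' ∈ l, χ' = φ ∨ χ' ∈ T := fun χ' hχ' => hmem χ' (by simp [hχ'])
      have step : DerivFrom CS T (φ.imp (χ.imp ψ)) := ih (χ.imp ψ) hmem' hd'
      rcases hmem χ (by simp) with hc | hc
      · rw [hc] at step
        have tcon : Taut ((φ.imp (φ.imp ψ)).imp (φ.imp ψ)) := by
          intro v hb hi; cases hφ : v φ <;> cases hψ : v ψ <;> simp [hi, hφ, hψ]
        exact derivFrom_mp (derivFrom_of_deriv (deriv_taut tcon)) step
      · have tswap : Taut ((φ.imp (χ.imp ψ)).imp (χ.imp (φ.imp ψ))) := by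
          intro v hb hi
          cases hφ : v φ <;> cases hχ : v χ <;> cases hψ : v ψ <;> simp [hi, hφ, hχ, hψ]
        have := derivFrom_mp (derivFrom_of_deriv (deriv_taut tswap)) step
        exact derivFrom_mp this (derivFrom_mem hc)

lemma deduction {T : Set (Fm Ag Const Var Atom)} {φ ψ : Fm Ag Const Var Atom}
    (h : DerivFrom CS (insert φ T) ψ) : DerivFrom CS T (φ.imp ψ) := by
  obtain ⟨L, hL, hd⟩ := h
  exact deduction_aux L ψ (fun χ hχ => by
    rcases hL χ hχ with hc | hc
    · exact Or.inl hc
    · exact Or.inr hc) hd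

lemma mcs_closed {Γ : Set (Fm Ag Const Var Atom)} (hΓ : Γ ∈ MCS CS)
    {φ : Fm Ag Const Var Atom} (h : DerivFrom CS Γ φ) : φ ∈ Γ := by
  by_contra hφ
  have hincons : ¬ Consistent CS (insert φ Γ) :=
    hΓ.2 (insert φ Γ) (Set.ssubset_insert hφ)
  have hbot : DerivFrom CS (insert φ Γ) Fm.bot := by
    by_contra hc; exact hincons hc
  have hnφ : DerivFrom CS Γ (Fm.neg φ) := deduction hbot
  exact hΓ.1 (derivFrom_mp hnφ h)

lemma mcs_mp {Γ : Set (Fm Ag Const Var Atom)} (hΓ : Γ ∈ MCS CS)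
    {φ ψ : Fm Ag Const Var Atom} (hφ : φ ∈ Γ) (d : Deriv CS (φ.imp ψ)) : ψ ∈ Γ :=
  mcs_closed hΓ (derivFrom_mp (derivFrom_of_deriv d) (derivFrom_mem hφ))

lemma mcs_neg_iff {Γ : Set (Fm Ag Const Var Atom)} (hΓ : Γ ∈ MCS CS)
    (φ : Fm Ag Const Var Atom) : Fm.neg φ ∈ Γ ↔ φ ∉ Γ := by
  constructor
  · intro hn hφ
    exact hΓ.1 (derivFrom_mp (derivFrom_mem hn) (derivFrom_mem hφ))
  · intro hφ
    have hincons : ¬ Consistent CS (insert φ Γ) :=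
      hΓ.2 (insert φ Γ) (Set.ssubset_insert hφ)
    have hbot : DerivFrom CS (insert φ Γ) Fm.bot := by
      by_contra hc; exact hincons hc
    exact mcs_closed hΓ (deduction hbot)

end Aux

/-- properties of the R_○ configuration X R_○ Y via Γ, Δ. -/
theorem rnext_properties (Ag Const Var Atom : Type)
    (CS : ConstSpec Ag Const Var Atom) (χ : Fm Ag Const Var Atom)
    (X Y Γ Δ : Set (Fm Ag Const Var Atom))
    (hX : X ∈ MCSx CS χ) (hY : Y ∈ MCSx CS χ)
    (hΓ : Γ ∈ MCS CS) (hΔ : Δ ∈ MCS CS)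
    (hXΓ : X = Γ ∩ Fm.subfPlus χ) (hYΔ : Y = Δ ∩ Fm.subfPlus χ)
    (h : {φ : Fm Ag Const Var Atom | Fm.next φ ∈ Γ} ⊆ Δ) :
    ∀ φ : Fm Ag Const Var Atom,
      (Fm.next φ ∈ Γ ↔ φ ∈ Δ) ∧
      (φ ∈ Γ ↔ Fm.sprev φ ∈ Δ) ∧
      (φ ∈ Γ ↔ Fm.wprev φ ∈ Δ) := by
  -- part 2 forward, as a general lemma
  have two_fwd : ∀ φ : Fm Ag Const Var Atom, φ ∈ Γ → Fm.sprev φ ∈ Δ := by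
    intro φ hφ
    have hnx : Fm.next (Fm.sprev φ) ∈ Γ := mcs_mp hΓ hφ (Deriv.ax (IsAxiom.fp φ))
    exact h hnx
  intro φ
  refine ⟨⟨fun hnφ => h hnφ, ?_⟩, ⟨two_fwd φ, ?_⟩, ⟨?_, ?_⟩⟩
  · -- φ ∈ Δ → next φ ∈ Γ
    intro hφ
    by_contra hnφ
    have hneg : Fm.neg (Fm.next φ) ∈ Γ := (mcs_neg_iff hΓ _).2 hnφ
    have tproj : Taut ((Fm.biim (Fm.next (Fm.neg φ))
        (Fm.neg (Fm.next φ))).imp ((Fm.neg (Fm.next φ)).imp (Fm.next (Fm.neg φ)))) := by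
      intro v hb hi
      cases hA : v (Fm.next (Fm.neg φ)) <;> cases hB : v (Fm.neg (Fm.next φ)) <;>
        simp [Fm.biim, hi, eval_conj v hb hi, hA, hB]
    have dfn : Deriv CS ((Fm.neg (Fm.next φ)).imp (Fm.next (Fm.neg φ))) :=
      (deriv_taut tproj).mp (Deriv.ax (IsAxiom.fn φ))
    have : Fm.next (Fm.neg φ) ∈ Γ := mcs_mp hΓ hneg dfn
    have : Fm.neg φ ∈ Δ := h this
    exact (mcs_neg_iff hΔ φ).1 this hφ
  · -- sprev φ ∈ Δ → φ ∈ Γ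
    intro hsp
    by_contra hφ
    have hneg : Fm.neg φ ∈ Γ := (mcs_neg_iff hΓ φ).2 hφ
    have hsn : Fm.sprev (Fm.neg φ) ∈ Δ := two_fwd _ hneg
    have hwn : Fm.wprev (Fm.neg φ) ∈ Δ :=
      mcs_mp hΔ hsn (Deriv.ax (IsAxiom.sw (Fm.neg φ)))
    have : Fm.neg (Fm.wprev (Fm.neg φ)) ∈ Δ := hsp
    exact (mcs_neg_iff hΔ _).1 this hwn
  · -- φ ∈ Γ → wprev φ ∈ Δ
    intro hφ
    exact mcs_mp hΔ (two_fwd φ hφ) (Deriv.ax (IsAxiom.sw φ))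
  · -- wprev φ ∈ Δ → φ ∈ Γ
    intro hwp
    by_contra hφ
    have hneg : Fm.neg φ ∈ Γ := (mcs_neg_iff hΓ φ).2 hφ
    have hsn : Fm.sprev (Fm.neg φ) ∈ Δ := two_fwd _ hneg
    have hsn' : Fm.neg (Fm.wprev (Fm.neg (Fm.neg φ))) ∈ Δ := hsn
    have dnn : Deriv CS (φ.imp (Fm.neg (Fm.neg φ))) := by
      apply deriv_taut
      intro v hb hi
      cases hφ' : v φ <;> simp [eval_neg v hb hi, hi, hφ']
    have dmono : Deriv CS ((Fm.wprev φ).imp (Fm.wprev (Fm.neg (Fm.neg φ)))) :=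
      (Deriv.ax (IsAxiom.wprevK φ (Fm.neg (Fm.neg φ)))).mp (Deriv.necWPrev dnn)
    have : Fm.wprev (Fm.neg (Fm.neg φ)) ∈ Δ := mcs_mp hΔ hwp dmono
    exact (mcs_neg_iff hΔ _).1 hsn' this

end JTO
end

section
/- The χ-canonical F-interpreted system for JTO_CS is indeed an F-interpreted system for JTO_CS: each canonical R_i is reflexive and transitive, each canonical R^O_i is shift reflexive, the canonical E_i satisfies monotonicity, constant specification, application and positive introspection, and the canonical E^O_i satisfies constant specification, application, consistency and obligated factivity. -/
namespace JTO

/-!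
Each condition on the canonical system is the trace of an axiom of JTO in maximal consistent
sets, which contain all theorems and are closed under modus ponens: factivity gives reflexivity
of `R_i`, positive introspection gives transitivity of `R_i` and monotonicity of `E_i`, obligated
factivity gives shift reflexivity of `R^O_i`, and application, no-conflicts and the constant
specification give the closure conditions on the evidence functions.

Consistency of `E^O_i` needs one more ingredient. Since `E^O_i(X, t)` is an intersection over all
`Γ ∈ MCS` with `X = Γ̄`, it would contain every formula if there were no such `Γ`; Lindenbaum's
lemma, applied to the consistent set `X`, provides one for every `X ∈ MCS_χ`.
-/

variable {Ag Const Var Atom : Type} {CS : ConstSpec Ag Const Var Atom}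
  {T T' Γ X Y Z : Set (Fm Ag Const Var Atom)} {φ ψ χ : Fm Ag Const Var Atom} {i : Ag}

theorem taut_imp_top_imp (a : Fm Ag Const Var Atom) : Taut (a.imp (Fm.top.imp a)) := by
  intro v hbot himp
  simp [Fm.top, Fm.neg, himp, hbot]

theorem taut_conj_top_imp (a : Fm Ag Const Var Atom) : Taut ((Fm.conj a Fm.top).imp a) := by
  intro v hbot himp
  simp [Fm.conj, Fm.disj, Fm.top, Fm.neg, himp, hbot]

theorem taut_imp_top (a : Fm Ag Const Var Atom) : Taut (a.imp Fm.top) := by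
  intro v hbot himp
  simp [Fm.top, Fm.neg, himp, hbot]

theorem taut_imp_self (a : Fm Ag Const Var Atom) : Taut (a.imp a) := by
  intro v _ himp
  simp [himp]

theorem taut_conj_imp_conj_right (a b c : Fm Ag Const Var Atom) :
    Taut ((b.imp c).imp ((Fm.conj a b).imp (Fm.conj a c))) := by
  intro v hbot himp
  simp only [Fm.conj, Fm.disj, Fm.neg, himp, hbot]
  grind

theorem taut_conj_imp_of_imp_right (a b c : Fm Ag Const Var Atom) :
    Taut ((b.imp c).imp ((Fm.conj a b).imp c)) := by
  intro v hbot himp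
  simp only [Fm.conj, Fm.disj, Fm.neg, himp, hbot]
  grind

theorem taut_curry (a b c : Fm Ag Const Var Atom) :
    Taut (((Fm.conj a b).imp c).imp (b.imp (a.imp c))) := by
  intro v hbot himp
  simp only [Fm.conj, Fm.disj, Fm.neg, himp, hbot]
  grind

theorem taut_imp_trans (a b c : Fm Ag Const Var Atom) :
    Taut ((a.imp b).imp ((b.imp c).imp (a.imp c))) := by
  intro v _ himp
  simp only [himp]
  grind

theorem taut_imp_mp (d a b : Fm Ag Const Var Atom) :
    Taut ((d.imp (a.imp b)).imp ((d.imp a).imp (d.imp b))) := by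
  intro v _ himp
  simp only [himp]
  grind

theorem Deriv.of_taut (h : Taut φ) : Deriv CS φ :=
  .ax (.taut h)

theorem Deriv.imp_trans {a b c : Fm Ag Const Var Atom} (hab : Deriv CS (a.imp b))
    (hbc : Deriv CS (b.imp c)) : Deriv CS (a.imp c) :=
  ((Deriv.of_taut (taut_imp_trans a b c)).mp hab).mp hbc

theorem Deriv.imp_mp {d a b : Fm Ag Const Var Atom} (himp : Deriv CS (d.imp (a.imp b)))
    (h : Deriv CS (d.imp a)) : Deriv CS (d.imp b) :=
  ((Deriv.of_taut (taut_imp_mp d a b)).mp himp).mp h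

theorem deriv_conjList_append_imp_left :
    ∀ L₁ L₂ : List (Fm Ag Const Var Atom), Deriv CS ((conjList (L₁ ++ L₂)).imp (conjList L₁))
  | [], _ => .of_taut (taut_imp_top _)
  | φ :: L₁, L₂ =>
    (Deriv.of_taut (taut_conj_imp_conj_right φ _ _)).mp (deriv_conjList_append_imp_left L₁ L₂)

theorem deriv_conjList_append_imp_right :
    ∀ L₁ L₂ : List (Fm Ag Const Var Atom), Deriv CS ((conjList (L₁ ++ L₂)).imp (conjList L₂))
  | [], _ => .of_taut (taut_imp_self _)
  | φ :: L₁, L₂ =>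
    (Deriv.of_taut (taut_conj_imp_of_imp_right φ _ _)).mp (deriv_conjList_append_imp_right L₁ L₂)

theorem DerivFrom.of_deriv (h : Deriv CS φ) : DerivFrom CS T φ :=
  ⟨[], by simp, (Deriv.of_taut (taut_imp_top_imp φ)).mp h⟩

theorem DerivFrom.of_mem (h : φ ∈ T) : DerivFrom CS T φ :=
  ⟨[φ], by simpa using h, .of_taut (taut_conj_top_imp φ)⟩

theorem DerivFrom.mp (himp : DerivFrom CS T (φ.imp ψ)) (h : DerivFrom CS T φ) :
    DerivFrom CS T ψ := by
  obtain ⟨L₁, hL₁, d₁⟩ := himp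
  obtain ⟨L₂, hL₂, d₂⟩ := h
  refine ⟨L₁ ++ L₂, fun θ hθ => (List.mem_append.mp hθ).elim (hL₁ θ) (hL₂ θ), ?_⟩
  exact ((deriv_conjList_append_imp_left L₁ L₂).imp_trans d₁).imp_mp
    ((deriv_conjList_append_imp_right L₁ L₂).imp_trans d₂)

theorem DerivFrom.of_deriv_conjList_imp :
    ∀ (L : List (Fm Ag Const Var Atom)) (ψ : Fm Ag Const Var Atom),
      Deriv CS ((conjList L).imp ψ) → (∀ θ ∈ L, DerivFrom CS T θ) → DerivFrom CS T ψ
  | [], _, h, _ => ⟨[], by simp, h⟩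
  | θ :: L, ψ, h, hL =>
    (of_deriv_conjList_imp L _ ((Deriv.of_taut (taut_curry θ _ ψ)).mp h)
      fun θ' hθ' => hL θ' (List.mem_cons_of_mem θ hθ')).mp (hL θ List.mem_cons_self)

theorem DerivFrom.trans (h : DerivFrom CS T' ψ) (hT' : ∀ θ ∈ T', DerivFrom CS T θ) :
    DerivFrom CS T ψ :=
  let ⟨L, hL, d⟩ := h
  of_deriv_conjList_imp L ψ d fun θ hθ => hT' θ (hL θ hθ)

theorem Consistent.of_subset (h : Consistent CS T') (hT : T ⊆ T') : Consistent CS T :=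
  fun hbot => h (hbot.trans fun _ hθ => .of_mem (hT hθ))

theorem isOfFiniteCharacter_consistent :
    Order.IsOfFiniteCharacter {T : Set (Fm Ag Const Var Atom) | Consistent CS T} := by
  refine fun T => ⟨fun hT T' hT' _ => hT.of_subset hT', fun hfin ⟨L, hL, d⟩ => ?_⟩
  exact hfin {θ | θ ∈ L} (fun θ hθ => hL θ hθ) L.finite_toSet ⟨L, fun _ => id, d⟩

namespace MCS

theorem mem_of_derivFrom (hΓ : Γ ∈ MCS CS) (h : DerivFrom CS Γ φ) : φ ∈ Γ := by
  by_contra hφ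
  have hbot : DerivFrom CS (insert φ Γ) Fm.bot := not_not.mp (hΓ.2 _ (Set.ssubset_insert hφ))
  refine hΓ.1 (hbot.trans fun θ hθ => ?_)
  rcases hθ with rfl | hθ
  exacts [h, .of_mem hθ]

theorem mem_of_isAxiom (hΓ : Γ ∈ MCS CS) (h : IsAxiom φ) : φ ∈ Γ :=
  mem_of_derivFrom hΓ (.of_deriv (.ax h))

theorem mem_of_mem_set (hΓ : Γ ∈ MCS CS) (h : φ ∈ CS.set) : φ ∈ Γ :=
  mem_of_derivFrom hΓ (.of_deriv (.csax h))

theorem mem_of_imp_mem (hΓ : Γ ∈ MCS CS) (himp : φ.imp ψ ∈ Γ) (h : φ ∈ Γ) : ψ ∈ Γ :=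
  mem_of_derivFrom hΓ ((DerivFrom.of_mem himp).mp (.of_mem h))

theorem bot_notMem (hΓ : Γ ∈ MCS CS) : Fm.bot ∉ Γ :=
  fun h => hΓ.1 (.of_mem h)

theorem jbox_bang_mem (hΓ : Γ ∈ MCS CS) {t : TmE Const Var}
    (h : Fm.jbox i t φ ∈ Γ) : Fm.jbox i t.bang (Fm.jbox i t φ) ∈ Γ :=
  mem_of_imp_mem hΓ (mem_of_isAxiom hΓ (.pos i t φ)) h

theorem exists_superset (hT : Consistent CS T) : ∃ Γ ∈ MCS CS, T ⊆ Γ := by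
  obtain ⟨Γ, hTΓ, hΓ⟩ := isOfFiniteCharacter_consistent.exists_maximal hT
  exact ⟨Γ, ⟨hΓ.prop, fun Δ hΓΔ hΔ => hΓΔ.not_subset (hΓ.2 hΔ hΓΔ.subset)⟩, hTΓ⟩

end MCS

theorem MCSx.exists_mcs_eq_inter (hX : X ∈ MCSx CS χ) :
    ∃ Γ ∈ MCS CS, X = Γ ∩ Fm.subfPlus χ := by
  obtain ⟨Γ, hΓ, hXΓ⟩ := MCS.exists_superset hX.2.1
  refine ⟨Γ, hΓ, (Set.subset_inter hXΓ hX.1).antisymm fun ψ hψ => ?_⟩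
  by_contra hψX
  refine hX.2.2 (insert ψ X) (Set.insert_subset hψ.2 hX.1) (Set.ssubset_insert hψX) ?_
  exact hΓ.1.of_subset (Set.insert_subset hψ.1 hXΓ)

theorem canK_refl (CS : ConstSpec Ag Const Var Atom) (χ : Fm Ag Const Var Atom) (i : Ag)
    (X : Set (Fm Ag Const Var Atom)) : canK CS χ i X X := by
  rintro Δ hΔ rfl
  refine ⟨Δ, hΔ, rfl, fun φ ⟨t, ht⟩ => ?_⟩
  exact MCS.mem_of_imp_mem hΔ (MCS.mem_of_isAxiom hΔ (.fact i t φ)) ht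

theorem canK_trans (hXY : canK CS χ i X Y) (hYZ : canK CS χ i Y Z) : canK CS χ i X Z := by
  intro Δ hΔ hZ
  obtain ⟨Θ, hΘ, hY, hΘΔ⟩ := hYZ Δ hΔ hZ
  obtain ⟨Γ, hΓ, hX, hΓΘ⟩ := hXY Θ hΘ hY
  exact ⟨Γ, hΓ, hX, fun φ ⟨t, ht⟩ => hΘΔ ⟨t, hΓΘ ⟨_, MCS.jbox_bang_mem hΓ ht⟩⟩⟩

theorem canKO_shift_refl (h : canKO CS χ i X Y) : canKO CS χ i Y Y := by
  obtain ⟨Γ, hΓ, Δ, hΔ, -, hY, hΓΔ⟩ := h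
  refine ⟨Δ, hΔ, Δ, hΔ, hY, hY, fun φ ⟨t, ht⟩ => ?_⟩
  exact MCS.mem_of_imp_mem hΔ (hΓΔ ⟨_, MCS.mem_of_isAxiom hΓ (.ofact i t φ)⟩) ht

theorem canE_mono (h : canK CS χ i X Y) (t : TmE Const Var) :
    canE CS χ i X t ⊆ canE CS χ i Y t := by
  intro φ hφ Δ hΔ hY
  obtain ⟨Γ, hΓ, hX, hΓΔ⟩ := h Δ hΔ hY
  exact hΓΔ ⟨_, MCS.jbox_bang_mem hΓ (hφ Γ hΓ hX)⟩

theorem mem_canE_of_mem_csE {t : TmE Const Var} (h : Fm.jbox i t φ ∈ CS.csE)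
    (X : Set (Fm Ag Const Var Atom)) : φ ∈ canE CS χ i X t :=
  fun _ hΓ _ => MCS.mem_of_mem_set hΓ h.1

theorem canE_app {t s : TmE Const Var} (himp : φ.imp ψ ∈ canE CS χ i X t)
    (h : φ ∈ canE CS χ i X s) : ψ ∈ canE CS χ i X (t.times s) := fun Γ hΓ hX =>
  MCS.mem_of_imp_mem hΓ (MCS.mem_of_imp_mem hΓ (MCS.mem_of_isAxiom hΓ (.app i t s φ ψ))
    (himp Γ hΓ hX)) (h Γ hΓ hX)

theorem canE_bang {t : TmE Const Var} (h : φ ∈ canE CS χ i X t) :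
    Fm.jbox i t φ ∈ canE CS χ i X t.bang :=
  fun Γ hΓ hX => MCS.jbox_bang_mem hΓ (h Γ hΓ hX)

theorem mem_canEO_of_mem_csO {t : TmO Const Var} (h : Fm.obox i t φ ∈ CS.csO)
    (X : Set (Fm Ag Const Var Atom)) : φ ∈ canEO CS χ i X t :=
  fun _ hΓ _ => MCS.mem_of_mem_set hΓ h.1

theorem canEO_app {t s : TmO Const Var} (himp : φ.imp ψ ∈ canEO CS χ i X t)
    (h : φ ∈ canEO CS χ i X s) : ψ ∈ canEO CS χ i X (t.times s) := fun Γ hΓ hX =>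
  MCS.mem_of_imp_mem hΓ (MCS.mem_of_imp_mem hΓ (MCS.mem_of_isAxiom hΓ (.appO i t s φ ψ))
    (himp Γ hΓ hX)) (h Γ hΓ hX)

theorem neg_notMem_canEO (hX : X ∈ MCSx CS χ) {t : TmO Const Var}
    (h : φ ∈ canEO CS χ i X t) : Fm.neg φ ∉ canEO CS χ i X t := by
  intro hneg
  obtain ⟨Γ, hΓ, hX⟩ := MCSx.exists_mcs_eq_inter hX
  have hperm : Fm.pbox i t φ ∈ Γ :=
    MCS.mem_of_imp_mem hΓ (MCS.mem_of_isAxiom hΓ (.noc i t φ)) (h Γ hΓ hX)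
  exact MCS.bot_notMem hΓ (MCS.mem_of_imp_mem hΓ hperm (hneg Γ hΓ hX))

theorem obox_imp_mem_canEO_ddag (CS : ConstSpec Ag Const Var Atom) (χ : Fm Ag Const Var Atom)
    (i : Ag) (X : Set (Fm Ag Const Var Atom)) (t : TmO Const Var) (φ : Fm Ag Const Var Atom) :
    (Fm.obox i t φ).imp φ ∈ canEO CS χ i X t.ddag :=
  fun _ hΓ _ => MCS.mem_of_isAxiom hΓ (.ofact i t φ)

/-- the χ-canonical F-interpreted system satisfies all the defining
conditions of an F-interpreted system for JTO_CS. -/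
theorem canonical_is_fis (Ag Const Var Atom : Type)
    (CS : ConstSpec Ag Const Var Atom) (χ : Fm Ag Const Var Atom) :
    -- each canonical R_i is reflexive
    (∀ i : Ag, ∀ X ∈ MCSx CS χ, canK CS χ i X X) ∧
    -- each canonical R_i is transitive
    (∀ i : Ag, ∀ X ∈ MCSx CS χ, ∀ Y ∈ MCSx CS χ, ∀ Z ∈ MCSx CS χ,
      canK CS χ i X Y → canK CS χ i Y Z → canK CS χ i X Z) ∧
    -- each canonical R^O_i is shift reflexive
    (∀ i : Ag, ∀ X ∈ MCSx CS χ, ∀ Y ∈ MCSx CS χ,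
      canKO CS χ i X Y → canKO CS χ i Y Y) ∧
    -- canonical E_i : monotonicity
    (∀ i : Ag, ∀ X ∈ MCSx CS χ, ∀ Y ∈ MCSx CS χ, ∀ t : TmE Const Var,
      canK CS χ i X Y → canE CS χ i X t ⊆ canE CS χ i Y t) ∧
    -- canonical E_i : constant specification
    (∀ (i : Ag) (t : TmE Const Var) (φ : Fm Ag Const Var Atom),
      Fm.jbox i t φ ∈ CS.csE → ∀ X ∈ MCSx CS χ, φ ∈ canE CS χ i X t) ∧
    -- canonical E_i : application
    (∀ i : Ag, ∀ X ∈ MCSx CS χ, ∀ (t s : TmE Const Var) (φ ψ : Fm Ag Const Var Atom),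
      φ.imp ψ ∈ canE CS χ i X t → φ ∈ canE CS χ i X s →
        ψ ∈ canE CS χ i X (TmE.times t s)) ∧
    -- canonical E_i : positive introspection
    (∀ i : Ag, ∀ X ∈ MCSx CS χ, ∀ (t : TmE Const Var) (φ : Fm Ag Const Var Atom),
      φ ∈ canE CS χ i X t → Fm.jbox i t φ ∈ canE CS χ i X (TmE.bang t)) ∧
    -- canonical E^O_i : constant specification
    (∀ (i : Ag) (t : TmO Const Var) (φ : Fm Ag Const Var Atom),
      Fm.obox i t φ ∈ CS.csO → ∀ X ∈ MCSx CS χ, φ ∈ canEO CS χ i X t) ∧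
    -- canonical E^O_i : application
    (∀ i : Ag, ∀ X ∈ MCSx CS χ, ∀ (t s : TmO Const Var) (φ ψ : Fm Ag Const Var Atom),
      φ.imp ψ ∈ canEO CS χ i X t → φ ∈ canEO CS χ i X s →
        ψ ∈ canEO CS χ i X (TmO.times t s)) ∧
    -- canonical E^O_i : consistency
    (∀ i : Ag, ∀ X ∈ MCSx CS χ, ∀ (t : TmO Const Var) (φ : Fm Ag Const Var Atom),
      φ ∈ canEO CS χ i X t → Fm.neg φ ∉ canEO CS χ i X t) ∧
    -- canonical E^O_i : obligated factivity
    (∀ i : Ag, ∀ X ∈ MCSx CS χ, ∀ (t : TmO Const Var) (φ : Fm Ag Const Var Atom),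
      (Fm.obox i t φ).imp φ ∈ canEO CS χ i X (TmO.ddag t)) :=
  ⟨fun i X _ => canK_refl CS χ i X,
    fun _ _ _ _ _ _ _ => canK_trans,
    fun _ _ _ _ _ => canKO_shift_refl,
    fun _ _ _ _ _ t h => canE_mono h t,
    fun _ _ _ h X _ => mem_canE_of_mem_csE h X,
    fun _ _ _ _ _ _ _ => canE_app,
    fun _ _ _ _ _ => canE_bang,
    fun _ _ _ h X _ => mem_canEO_of_mem_csO h X,
    fun _ _ _ _ _ _ _ => canEO_app,
    fun _ _ hX _ _ => neg_notMem_canEO hX,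
    fun i X _ t φ => obox_imp_mem_canEO_ddag CS χ i X t φ⟩

end JTO
end
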